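/- arXiv:2506.08546 — 2 statements merged into one kernel-verified Lean document; each statement's English description precedes it below -/
import Mathlib

section
/- Let c ≥ 1 and k ≥ 1 be integers such that c divides some power of k and k divides some power of c (i.e., c and k have the same set of prime divisors). Then for any integers n₁, n₂: Σ*_{α mod c} e((α+k)n₁/c + (kᾱ+1)n₂/(ck)) = Σ*_{β mod c} e(β̄n₁/c + (1−kβ)⁻¹n₂/(ck)), where * restricts to residues coprime to c, bars/inverses are taken modulo c (resp. ck in the second argument as appropriate), and e(x) = exp(2πix). -/
open scoped BigOperators

/-- `e x = exp(2πix)`. -/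
noncomputable def e (x : ℝ) : ℂ := Complex.exp (2 * (Real.pi : ℂ) * Complex.I * (x : ℂ))

lemma e_eq_of_sub_int {x y : ℝ} (m : ℤ) (h : x - y = m) : e x = e y := by
  have hx : x = y + m := by linarith
  subst hx
  unfold e
  have : (2 * (Real.pi : ℂ) * Complex.I * ((y + (m : ℝ) : ℝ) : ℂ))
      = 2 * (Real.pi : ℂ) * Complex.I * (y : ℂ) + (m : ℤ) * (2 * Real.pi * Complex.I) := by
    push_cast; ring
  rw [this, Complex.exp_add, Complex.exp_int_mul_two_pi_mul_I, mul_one]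

lemma zmod_inv_isUnit {n : ℕ} {x : ZMod n} (hx : IsUnit x) : IsUnit x⁻¹ :=
  IsUnit.of_mul_eq_one x (ZMod.inv_mul_of_unit x hx)

lemma zmod_nat_dvd {n : ℕ} {x y : ℕ} (h : ((x : ℕ) : ZMod n) = ((y : ℕ) : ZMod n)) :
    (n : ℤ) ∣ (x : ℤ) - (y : ℤ) :=
  ((ZMod.natCast_eq_natCast_iff y x n).mp h.symm).dvd

lemma zmod_inv_inv {n : ℕ} {x : ZMod n} (hx : IsUnit x) : x⁻¹⁻¹ = x :=
  ZMod.inv_eq_of_mul_eq_one n x⁻¹ x (ZMod.inv_mul_of_unit x hx)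

open scoped Classical in
/-- Lemma 7.3: if `c` and `k` have the same prime divisors, then
`∑*_{α mod c} e((α+k)n₁/c + (kᾱ+1)n₂/(ck)) = ∑*_{β mod c} e(β̄n₁/c + (1−kβ)⁻¹n₂/(ck))`,
where `β̄` is the inverse mod `c` and `(1−kβ)⁻¹` the inverse mod `ck`. -/
theorem T_o_identity (c k : ℕ) (hc : 0 < c) (hk : 0 < k)
    (hck : ∃ i : ℕ, c ∣ k ^ i) (hkc : ∃ j : ℕ, k ∣ c ^ j) (n₁ n₂ : ℤ) :
    (∑ α ∈ (Finset.range c).filter (fun α : ℕ => IsUnit ((α : ZMod c))),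
      e ((((α : ℝ) + (k : ℝ)) * (n₁ : ℝ)) / (c : ℝ)
        + (((k : ℝ) * ((((α : ZMod c))⁻¹.val : ℕ) : ℝ) + 1) * (n₂ : ℝ)) / ((c : ℝ) * (k : ℝ))))
    = ∑ β ∈ (Finset.range c).filter (fun β : ℕ => IsUnit ((β : ZMod c))),
      e (((((β : ZMod c))⁻¹.val : ℝ) * (n₁ : ℝ)) / (c : ℝ)
        + ((((1 - (k : ZMod (c * k)) * (β : ZMod (c * k)))⁻¹).val : ℝ) * (n₂ : ℝ))
            / ((c : ℝ) * (k : ℝ))) := by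
  haveI : NeZero c := ⟨hc.ne'⟩
  haveI : NeZero (c * k) := ⟨Nat.mul_ne_zero hc.ne' hk.ne'⟩
  obtain ⟨I, hI⟩ := hck
  -- k is nilpotent mod c
  have hknilc : IsNilpotent ((k : ℕ) : ZMod c) := by
    refine ⟨I, ?_⟩
    rw [← Nat.cast_pow]
    exact (ZMod.natCast_eq_zero_iff _ _).mpr hI
  have hunit_add : ∀ x : ZMod c, IsUnit x → IsUnit (x + (k : ℕ)) := fun x hx =>
    hknilc.isUnit_add_left_of_commute hx (Commute.all _ _)
  have hunit_sub : ∀ x : ZMod c, IsUnit x → IsUnit (x - (k : ℕ)) := fun x hx => by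
    have := hknilc.neg.isUnit_add_left_of_commute hx (Commute.all _ _)
    simpa [sub_eq_add_neg] using this
  -- the bijection and its inverse
  set i : ℕ → ℕ := fun α => (((α : ZMod c) + (k : ℕ))⁻¹).val with hidef
  set j : ℕ → ℕ := fun β => (((β : ZMod c))⁻¹ - (k : ℕ)).val with hjdef
  refine Finset.sum_nbij' i j ?_ ?_ ?_ ?_ ?_
  · intro α hα
    simp only [Finset.mem_filter, Finset.mem_range] at hα ⊢
    obtain ⟨hαlt, hαu⟩ := hα
    refine ⟨ZMod.val_lt _, ?_⟩
    rw [hidef]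
    simp only [ZMod.natCast_val, ZMod.cast_id]
    exact zmod_inv_isUnit (hunit_add _ hαu)
  · intro β hβ
    simp only [Finset.mem_filter, Finset.mem_range] at hβ ⊢
    obtain ⟨hβlt, hβu⟩ := hβ
    refine ⟨ZMod.val_lt _, ?_⟩
    rw [hjdef]
    simp only [ZMod.natCast_val, ZMod.cast_id]
    exact hunit_sub _ (zmod_inv_isUnit hβu)
  · intro α hα
    simp only [Finset.mem_filter, Finset.mem_range] at hα
    obtain ⟨hαlt, hαu⟩ := hα
    have hA : IsUnit ((α : ZMod c) + (k : ℕ)) := hunit_add _ hαu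
    rw [hjdef, hidef]
    simp only [ZMod.natCast_val, ZMod.cast_id]
    rw [zmod_inv_inv hA, add_sub_cancel_right, ZMod.val_cast_of_lt hαlt]
  · intro β hβ
    simp only [Finset.mem_filter, Finset.mem_range] at hβ
    obtain ⟨hβlt, hβu⟩ := hβ
    rw [hidef, hjdef]
    simp only [ZMod.natCast_val, ZMod.cast_id]
    rw [sub_add_cancel, zmod_inv_inv hβu, ZMod.val_cast_of_lt hβlt]
  · intro α hα
    simp only [Finset.mem_filter, Finset.mem_range] at hα
    obtain ⟨hαlt, hαu⟩ := hα
    have hA : IsUnit ((α : ZMod c) + (k : ℕ)) := hunit_add _ hαu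
    -- notation
    set a : ℕ := ((α : ZMod c))⁻¹.val with hadef
    set β : ℕ := i α with hβdef
    have hβcast : ((β : ℕ) : ZMod c) = ((α : ZMod c) + (k : ℕ))⁻¹ := by
      rw [hβdef, hidef]
      simp only [ZMod.natCast_val, ZMod.cast_id]
    -- first component congruence: β̄ = α + k mod c
    have hβbar : ((β : ZMod c))⁻¹ = (α : ZMod c) + (k : ℕ) := by
      rw [hβcast, zmod_inv_inv hA]
    have hvalcast : ∀ x : ZMod c, ((x.val : ℕ) : ZMod c) = x := by
      intro x; simp only [ZMod.natCast_val, ZMod.cast_id]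
    have h1 : (c : ℤ) ∣ ((α : ℤ) + (k : ℤ)) - (((β : ZMod c))⁻¹.val : ℤ) := by
      have hcongr : (((α + k : ℕ)) : ZMod c) = ((((β : ZMod c))⁻¹.val : ℕ) : ZMod c) := by
        rw [hvalcast, hβbar]; push_cast; ring
      have := zmod_nat_dvd hcongr
      push_cast at this
      convert this using 2
    -- integer facts
    have hαa : (c : ℤ) ∣ (a : ℤ) * (α : ℤ) - 1 := by
      have hcongr : (((a * α : ℕ)) : ZMod c) = ((1 : ℕ) : ZMod c) := by
        push_cast
        rw [hadef, hvalcast]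
        exact ZMod.inv_mul_of_unit _ hαu
      have := zmod_nat_dvd hcongr
      push_cast at this
      convert this using 2
    have hβe : (c : ℤ) ∣ (β : ℤ) * ((α : ℤ) + (k : ℤ)) - 1 := by
      have hcongr : (((β * (α + k) : ℕ)) : ZMod c) = ((1 : ℕ) : ZMod c) := by
        push_cast
        rw [hβcast]
        exact ZMod.inv_mul_of_unit _ hA
      have := zmod_nat_dvd hcongr
      push_cast at this
      convert this using 2
    -- key divisibility mod c
    have hT : (c : ℤ) ∣ ((a : ℤ) - (β : ℤ) - (k : ℤ) * (a : ℤ) * (β : ℤ)) := by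
      obtain ⟨u, hu⟩ := hαa
      obtain ⟨v, hv⟩ := hβe
      have hαT : (c : ℤ) ∣ (α : ℤ) * ((a : ℤ) - (β : ℤ) - (k : ℤ) * (a : ℤ) * (β : ℤ)) := by
        refine ⟨u - (k : ℤ) * (β : ℤ) * u - v, ?_⟩
        linear_combination (1 - (k : ℤ) * (β : ℤ)) * hu - hv
      have hcop : IsCoprime ((c : ℤ)) ((α : ℤ)) := by
        have : Nat.Coprime α c := (ZMod.isUnit_iff_coprime α c).mp hαu
        exact (Nat.isCoprime_iff_coprime.mpr this.symm)
      exact hcop.dvd_of_dvd_mul_left hαT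
    -- divisibility mod ck
    have hW : ((c : ℤ) * (k : ℤ)) ∣ ((1 - (k : ℤ) * (β : ℤ)) * ((k : ℤ) * (a : ℤ) + 1) - 1) := by
      obtain ⟨t, ht⟩ := hT
      refine ⟨t, ?_⟩
      linear_combination (k : ℤ) * ht
    -- compute the inverse (1 - kβ)⁻¹ in ZMod (ck)
    have hmul : ((1 : ZMod (c * k)) - (k : ZMod (c * k)) * (β : ZMod (c * k)))
        * (((k * a + 1 : ℕ)) : ZMod (c * k)) = 1 := by
      have h0 : (((1 - (k : ℤ) * (β : ℤ)) * ((k : ℤ) * (a : ℤ) + 1) - 1 : ℤ) : ZMod (c * k)) = 0 := by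
        rw [ZMod.intCast_zmod_eq_zero_iff_dvd]
        push_cast
        exact_mod_cast hW
      push_cast at h0 ⊢
      linear_combination h0
    have hwinv : (1 - (k : ZMod (c * k)) * (β : ZMod (c * k)))⁻¹
        = (((k * a + 1 : ℕ)) : ZMod (c * k)) :=
      ZMod.inv_eq_of_mul_eq_one _ _ _ hmul
    have h2 : ((c : ℤ) * (k : ℤ)) ∣ ((k : ℤ) * (a : ℤ) + 1)
        - (((1 - (k : ZMod (c * k)) * (β : ZMod (c * k)))⁻¹).val : ℤ) := by
      have hcongr : (((k * a + 1 : ℕ)) : ZMod (c * k))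
          = (((((1 - (k : ZMod (c * k)) * (β : ZMod (c * k)))⁻¹).val : ℕ)) : ZMod (c * k)) := by
        rw [← hwinv]
        simp only [ZMod.natCast_val, ZMod.cast_id]
      have := zmod_nat_dvd hcongr
      push_cast at this
      convert this using 2
    -- conclude equality of the exponential terms
    obtain ⟨m₁, hm₁⟩ := h1
    obtain ⟨m₂, hm₂⟩ := h2
    apply e_eq_of_sub_int (m₁ * n₁ + m₂ * n₂)
    have hc0 : (c : ℝ) ≠ 0 := Nat.cast_ne_zero.mpr hc.ne'
    have hk0 : (k : ℝ) ≠ 0 := Nat.cast_ne_zero.mpr hk.ne'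
    have hm₁R : ((α : ℝ) + (k : ℝ)) - ((((β : ZMod c))⁻¹.val : ℕ) : ℝ) = (c : ℝ) * (m₁ : ℝ) := by
      exact_mod_cast congrArg (Int.cast : ℤ → ℝ) hm₁
    have hm₂R : ((k : ℝ) * ((a : ℕ) : ℝ) + 1)
        - ((((1 - (k : ZMod (c * k)) * (β : ZMod (c * k)))⁻¹).val : ℕ) : ℝ)
        = ((c : ℝ) * (k : ℝ)) * (m₂ : ℝ) := by
      exact_mod_cast congrArg (Int.cast : ℤ → ℝ) hm₂
    simp only [ZMod.natCast_val] at hm₁R hm₂R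
    rw [show ((m₁ * n₁ + m₂ * n₂ : ℤ) : ℝ) = (m₁ : ℝ) * (n₁ : ℝ) + (m₂ : ℝ) * (n₂ : ℝ) by
      push_cast; ring]
    field_simp
    simp only [ZMod.natCast_val]
    linear_combination ((n₁ : ℝ) * (k : ℝ)) * hm₁R + (n₂ : ℝ) * hm₂R
end

section
/- Let a : ℕ → ℝ be multiplicative with a(p)² = a(p²) + 1 at every prime p. For a squarefree positive integer m, define B(m) = Σ_{d·r | m, with d and r ranging over squarefree divisors with dr | m and gcd(d,r)=1 implied by squarefreeness of m} E(d)E²(r)/(d·r²), where E(d) = ∏_{p|d} (a(p)² − a(p²)/p + 1/p²)/(1 + 1/p) and E²(r) = ∏_{p|r} (a(p²) − 1/p)/(1 + 1/p). Then B(m) = ∏_{p|m} (1 + a(p)²/(p+1)). -/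
open scoped BigOperators

/-- The Euler factor `E(d) = ∏_{p|d} (a(p)² − a(p²)/p + 1/p²)/(1 + 1/p)`. -/
noncomputable def Efun (a : ℕ → ℝ) (d : ℕ) : ℝ :=
  ∏ p ∈ d.primeFactors, (((a p) ^ 2 - a (p ^ 2) / (p : ℝ) + 1 / (p : ℝ) ^ 2) / (1 + 1 / (p : ℝ)))

/-- The Euler factor `E²(r) = ∏_{p|r} (a(p²) − 1/p)/(1 + 1/p)`. -/
noncomputable def E2fun (a : ℕ → ℝ) (r : ℕ) : ℝ :=
  ∏ p ∈ r.primeFactors, ((a (p ^ 2) - 1 / (p : ℝ)) / (1 + 1 / (p : ℝ)))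

open Nat ArithmeticFunction
open scoped ArithmeticFunction.zeta

/-- The arithmetic function `n ↦ E(n)/n`. -/
noncomputable def Ffun (a : ℕ → ℝ) : ArithmeticFunction ℝ :=
  ⟨fun n => if n = 0 then 0 else Efun a n / n, rfl⟩

/-- The arithmetic function `n ↦ E²(n)/n²`. -/
noncomputable def Gfun (a : ℕ → ℝ) : ArithmeticFunction ℝ :=
  ⟨fun n => if n = 0 then 0 else E2fun a n / (n : ℝ) ^ 2, rfl⟩

lemma Ffun_apply (a : ℕ → ℝ) {n : ℕ} (hn : n ≠ 0) : Ffun a n = Efun a n / n := if_neg hn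

lemma Gfun_apply (a : ℕ → ℝ) {n : ℕ} (hn : n ≠ 0) : Gfun a n = E2fun a n / (n : ℝ) ^ 2 :=
  if_neg hn

lemma Efun_mul (a : ℕ → ℝ) {m n : ℕ} (h : m.Coprime n) :
    Efun a (m * n) = Efun a m * Efun a n := by
  unfold Efun
  rw [Nat.Coprime.primeFactors_mul h,
    Finset.prod_union (Nat.Coprime.disjoint_primeFactors h)]

lemma E2fun_mul (a : ℕ → ℝ) {m n : ℕ} (h : m.Coprime n) :
    E2fun a (m * n) = E2fun a m * E2fun a n := by
  unfold E2fun
  rw [Nat.Coprime.primeFactors_mul h,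
    Finset.prod_union (Nat.Coprime.disjoint_primeFactors h)]

lemma Ffun_mult (a : ℕ → ℝ) : (Ffun a).IsMultiplicative := by
  constructor
  · simp [Ffun_apply a one_ne_zero, Efun]
  · intro m n h
    rcases eq_or_ne m 0 with rfl | hm
    · simp [Ffun]
    rcases eq_or_ne n 0 with rfl | hn
    · simp [Ffun]
    rw [Ffun_apply a (Nat.mul_ne_zero hm hn), Ffun_apply a hm, Ffun_apply a hn,
      Efun_mul a h, Nat.cast_mul]
    have hm' : (m:ℝ) ≠ 0 := Nat.cast_ne_zero.mpr hm
    have hn' : (n:ℝ) ≠ 0 := Nat.cast_ne_zero.mpr hn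
    field_simp

lemma Gfun_mult (a : ℕ → ℝ) : (Gfun a).IsMultiplicative := by
  constructor
  · simp [Gfun_apply a one_ne_zero, E2fun]
  · intro m n h
    rcases eq_or_ne m 0 with rfl | hm
    · simp [Gfun]
    rcases eq_or_ne n 0 with rfl | hn
    · simp [Gfun]
    rw [Gfun_apply a (Nat.mul_ne_zero hm hn), Gfun_apply a hm, Gfun_apply a hn,
      E2fun_mul a h, Nat.cast_mul, mul_pow]
    have hm' : (m:ℝ) ≠ 0 := Nat.cast_ne_zero.mpr hm
    have hn' : (n:ℝ) ≠ 0 := Nat.cast_ne_zero.mpr hn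
    field_simp

/-- Lemma 7.5, equation (7.46): for squarefree `m`,
`B(m) = Σ_{dr|m} E(d)E²(r)/(dr²) = ∏_{p|m} (1 + a(p)²/(p+1))`. -/
theorem B_euler_product (a : ℕ → ℝ) (ha : ∀ p : ℕ, p.Prime → (a p) ^ 2 = a (p ^ 2) + 1)
    (m : ℕ) (hm : 0 < m) (hsf : Squarefree m) :
    ∑ d ∈ m.divisors, ∑ r ∈ (m / d).divisors, Efun a d * E2fun a r / ((d : ℝ) * (r : ℝ) ^ 2)
      = ∏ p ∈ m.primeFactors, (1 + (a p) ^ 2 / ((p : ℝ) + 1)) := by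
  set H : ArithmeticFunction ℝ := Ffun a * (Gfun a * (ζ : ArithmeticFunction ℝ)) with hH
  have hHmult : H.IsMultiplicative :=
    (Ffun_mult a).mul ((Gfun_mult a).mul (ArithmeticFunction.IsMultiplicative.natCast
      ArithmeticFunction.isMultiplicative_zeta))
  -- LHS equals H m
  have hG : ∀ k : ℕ, k ≠ 0 →
      (Gfun a * (ζ : ArithmeticFunction ℝ)) k = ∑ r ∈ k.divisors, E2fun a r / (r : ℝ) ^ 2 := by
    intro k hk
    rw [ArithmeticFunction.mul_apply, Nat.sum_divisorsAntidiagonal (fun x y => Gfun a x *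
      (ζ : ArithmeticFunction ℝ) y)]
    refine Finset.sum_congr rfl fun r hr => ?_
    have hr0 : r ≠ 0 := (Nat.pos_of_mem_divisors hr).ne'
    have hkr : k / r ≠ 0 := by
      have := Nat.div_pos (Nat.le_of_dvd (Nat.pos_of_ne_zero hk) (Nat.dvd_of_mem_divisors hr))
        (Nat.pos_of_ne_zero hr0)
      exact this.ne'
    rw [Gfun_apply a hr0, ArithmeticFunction.natCoe_apply,
      ArithmeticFunction.zeta_apply_ne hkr]
    simp
  have hLHS : (∑ d ∈ m.divisors, ∑ r ∈ (m / d).divisors,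
      Efun a d * E2fun a r / ((d : ℝ) * (r : ℝ) ^ 2)) = H m := by
    rw [hH, ArithmeticFunction.mul_apply, Nat.sum_divisorsAntidiagonal (fun x y => Ffun a x *
      (Gfun a * (ζ : ArithmeticFunction ℝ)) y)]
    refine Finset.sum_congr rfl fun d hd => ?_
    have hd0 : d ≠ 0 := (Nat.pos_of_mem_divisors hd).ne'
    have hmd : m / d ≠ 0 :=
      (Nat.div_pos (Nat.le_of_dvd hm (Nat.dvd_of_mem_divisors hd))
        (Nat.pos_of_ne_zero hd0)).ne'
    rw [Ffun_apply a hd0, hG _ hmd, Finset.mul_sum]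
    refine Finset.sum_congr rfl fun r hr => ?_
    field_simp
  rw [hLHS]
  -- H m = ∏ p | m, H p for squarefree m
  have hfac : m = ∏ p ∈ m.primeFactors, p := (Nat.prod_primeFactors_of_squarefree hsf).symm
  rw [show H m = ∏ p ∈ m.primeFactors, H p by
    conv_lhs => rw [hfac]
    exact ArithmeticFunction.IsMultiplicative.map_prod_of_prime hHmult _
      (fun p hp => Nat.prime_of_mem_primeFactors hp)]
  refine Finset.prod_congr rfl fun p hp => ?_
  have hpp : p.Prime := Nat.prime_of_mem_primeFactors hp
  have hp0 : (p : ℝ) > 0 := by exact_mod_cast hpp.pos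
  have hp1 : (p : ℝ) + 1 ≠ 0 := by positivity
  -- compute H p
  have hsingle : p.primeFactors = {p} := Nat.Prime.primeFactors hpp
  have hGp : (Gfun a * (ζ : ArithmeticFunction ℝ)) p
      = 1 + E2fun a p / (p : ℝ) ^ 2 := by
    rw [hG p hpp.pos.ne', Nat.Prime.divisors hpp, Finset.sum_insert (by
      simp [hpp.one_lt.ne]), Finset.sum_singleton]
    simp [E2fun]
  have hHp : H p = (1 + E2fun a p / (p : ℝ) ^ 2) + Efun a p / p := by
    rw [hH, ArithmeticFunction.mul_apply, Nat.sum_divisorsAntidiagonal (fun x y => Ffun a x *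
      (Gfun a * (ζ : ArithmeticFunction ℝ)) y), Nat.Prime.divisors hpp,
      Finset.sum_insert (by simp [hpp.one_lt.ne]), Finset.sum_singleton]
    rw [Nat.div_one, Nat.div_self hpp.pos, hGp]
    have h1 : Ffun a 1 = 1 := (Ffun_mult a).1
    rw [h1, Ffun_apply a hpp.pos.ne',
      ((Gfun_mult a).mul (ArithmeticFunction.IsMultiplicative.natCast
        ArithmeticFunction.isMultiplicative_zeta)).1]
    ring
  rw [hHp]
  have hEp : Efun a p = ((a p) ^ 2 - a (p ^ 2) / (p : ℝ) + 1 / (p : ℝ) ^ 2) / (1 + 1 / (p : ℝ)) := by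
    simp [Efun, hsingle]
  have hE2p : E2fun a p = (a (p ^ 2) - 1 / (p : ℝ)) / (1 + 1 / (p : ℝ)) := by
    simp [E2fun, hsingle]
  rw [hEp, hE2p, ha p hpp]
  have h1p : 1 + 1 / (p : ℝ) ≠ 0 := by positivity
  field_simp
  ring
end
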